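/- arXiv:2009.11642 — 6 statements merged into one kernel-verified Lean document; each statement's English description precedes it below -/
import Mathlib

section
/- Let H be a graph, possibly with loops, and let (G,L) be a consistent instance of the list homomorphism problem to the associated bipartite graph H*. Define L' : V(G) → 2^{V(H)} by L'(x) := {u ∈ V(H) : u' ∈ L(x) or u'' ∈ L(x)}. Then there exists a list homomorphism (G,L) → H* if and only if there exists a list homomorphism (G,L') → H. -/
open SimpleGraph

/-- A list homomorphism from `G` to the (possibly reflexive) graph given by the
symmetric relation `H`, respecting the lists `L`. -/
def ListHomRel {U W : Type} (G : SimpleGraph U) (H : W → W → Prop)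
    (L : U → Set W) (φ : U → W) : Prop :=
  (∀ v, φ v ∈ L v) ∧ ∀ ⦃u v : U⦄, G.Adj u v → H (φ u) (φ v)

/-- Two vertices are incomparable: neither neighbourhood contains the other. -/
def IncompPair {W : Type} (H : SimpleGraph W) (u v : W) : Prop :=
  ¬ H.neighborSet u ⊆ H.neighborSet v ∧ ¬ H.neighborSet v ⊆ H.neighborSet u

/-- A set is incomparable if its vertices are pairwise incomparable. -/
def IncompSet {W : Type} (H : SimpleGraph W) (S : Set W) : Prop :=
  ∀ u ∈ S, ∀ v ∈ S, u ≠ v → IncompPair H u v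

/-- The associated bipartite graph `H*` of a graph `H` (possibly with loops, given as a
symmetric relation): vertices `v' = Sum.inl v` and `v'' = Sum.inr v`, with `u'` adjacent
to `v''` iff `uv ∈ E(H)`. -/
def assocBip {W : Type} (H : W → W → Prop) : SimpleGraph (W ⊕ W) where
  Adj x y :=
    (∃ u v, x = Sum.inl u ∧ y = Sum.inr v ∧ H u v) ∨
    (∃ u v, x = Sum.inr u ∧ y = Sum.inl v ∧ H v u)
  symm := by
    constructor
    rintro x y (⟨u, v, rfl, rfl, h⟩ | ⟨u, v, rfl, rfl, h⟩)
    · exact Or.inr ⟨v, u, rfl, rfl, h⟩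
    · exact Or.inl ⟨v, u, rfl, rfl, h⟩
  loopless := by
    constructor
    rintro x (⟨u, v, h1, h2, _⟩ | ⟨u, v, h1, h2, _⟩) <;> subst h1 <;> simp at h2

/-!
A homomorphism to `H*` becomes one to `H` by forgetting the primes, since every edge `u'v''`
of `H*` comes from the edge `uv` of `H`.  Conversely, a homomorphism `ψ` to `H` is lifted by
priming `ψ x` on the class `XG` and double-priming it on the other class: the bipartition of `G`
makes every edge of `G` land on an edge `u'v''`, and the side conditions on the lists say that
only the primed (resp. double-primed) copy of `ψ x` can lie in `L x`.
-/

theorem ListHomRel.comp {U W W' : Type} {G : SimpleGraph U} {H : W → W → Prop}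
    {H' : W' → W' → Prop} {L : U → Set W} {L' : U → Set W'} {φ : U → W} (f : W → W')
    (hφ : ListHomRel G H L φ) (hfL : ∀ x, ∀ a ∈ L x, f a ∈ L' x)
    (hfH : ∀ ⦃a b⦄, H a b → H' (f a) (f b)) :
    ListHomRel G H' L' (f ∘ φ) :=
  ⟨fun x => hfL x _ (hφ.1 x), fun _ _ huv => hfH (hφ.2 huv)⟩

section assocBip

variable {W : Type} {H : W → W → Prop}

@[simp]
theorem assocBip_adj_inl_inr {u v : W} : (assocBip H).Adj (Sum.inl u) (Sum.inr v) ↔ H u v := by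
  simp [assocBip]

@[simp]
theorem assocBip_adj_inr_inl {u v : W} : (assocBip H).Adj (Sum.inr u) (Sum.inl v) ↔ H v u := by
  simp [assocBip]

theorem assocBip_adj_elim_id_id (hsym : ∀ u v, H u v → H v u) ⦃a b : W ⊕ W⦄
    (hab : (assocBip H).Adj a b) : H (Sum.elim id id a) (Sum.elim id id b) := by
  rcases hab with ⟨u, v, rfl, rfl, h⟩ | ⟨u, v, rfl, rfl, h⟩
  · exact h
  · exact hsym v u h

end assocBip

def bipLift {U W : Type} (X : Set U) [DecidablePred (· ∈ X)] (ψ : U → W) (x : U) : W ⊕ W :=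
  if x ∈ X then Sum.inl (ψ x) else Sum.inr (ψ x)

theorem listHomRel_bipLift {U W : Type} {H : W → W → Prop} (hsym : ∀ u v, H u v → H v u)
    {G : SimpleGraph U} {L : U → Set (W ⊕ W)} {X : Set U} [DecidablePred (· ∈ X)]
    (hbip : ∀ ⦃u v : U⦄, G.Adj u v → (u ∈ X ↔ v ∉ X))
    (hLX : ∀ x ∈ X, L x ⊆ Set.range Sum.inl) (hLY : ∀ x ∉ X, L x ⊆ Set.range Sum.inr)
    {ψ : U → W} (hψ : ListHomRel G H (fun x => {u | Sum.inl u ∈ L x ∨ Sum.inr u ∈ L x}) ψ) :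
    ListHomRel G (assocBip H).Adj L (bipLift X ψ) := by
  refine ⟨fun x => ?_, fun u v huv => ?_⟩
  · by_cases hx : x ∈ X
    · have hr : Sum.inr (ψ x) ∉ L x := fun h => by simpa using hLX x hx h
      simpa [bipLift, hx, hr] using hψ.1 x
    · have hl : Sum.inl (ψ x) ∉ L x := fun h => by simpa using hLY x hx h
      simpa [bipLift, hx, hl] using hψ.1 x
  · by_cases hu : u ∈ X
    · have hv : v ∉ X := (hbip huv).mp hu
      simpa [bipLift, hu, hv] using hψ.2 huv
    · have hv : v ∈ X := not_not.mp (mt (hbip huv).mpr hu)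
      simpa [bipLift, hu, hv] using hsym _ _ (hψ.2 huv)

theorem consistent_assocBip_iff_general {U W : Type} (H : W → W → Prop)
    (hsym : ∀ u v, H u v → H v u)
    (G : SimpleGraph U) (L : U → Set (W ⊕ W)) (XG : Set U)
    (hbipG : ∀ ⦃u v : U⦄, G.Adj u v → (u ∈ XG ↔ v ∉ XG))
    (hLX : ∀ x ∈ XG, L x ⊆ Set.range Sum.inl)
    (hLY : ∀ x ∉ XG, L x ⊆ Set.range Sum.inr) :
    (∃ φ : U → W ⊕ W, ListHomRel G (assocBip H).Adj L φ) ↔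
    (∃ ψ : U → W, ListHomRel G H
      (fun x => {u : W | Sum.inl u ∈ L x ∨ Sum.inr u ∈ L x}) ψ) := by
  classical
  constructor
  · rintro ⟨φ, hφ⟩
    refine ⟨_, hφ.comp (Sum.elim id id) (fun x a ha => ?_) (assocBip_adj_elim_id_id hsym)⟩
    cases a <;> simp [ha]
  · rintro ⟨ψ, hψ⟩
    exact ⟨_, listHomRel_bipLift hsym hbipG hLX hLY hψ⟩

/-- Proposition: let `H` be a graph (possibly with loops) and `(G,L)` a consistent instance
of the list homomorphism problem to the associated bipartite graph `H*`: `G` is connected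
and bipartite with bipartition class `XG`, lists of vertices of `XG` consist of primed
vertices, lists of the other class of double-primed vertices, and all lists are
incomparable sets.  With `L' x := {u : u' ∈ L x or u'' ∈ L x}`, we have
`(G,L) → H*` iff `(G,L') → H`. -/
theorem consistent_assocBip_iff {U W : Type} (H : W → W → Prop)
    (hsym : ∀ u v, H u v → H v u)
    (G : SimpleGraph U) (L : U → Set (W ⊕ W)) (XG : Set U)
    (hconn : G.Connected)
    (hbipG : ∀ ⦃u v : U⦄, G.Adj u v → (u ∈ XG ↔ v ∉ XG))
    (hLX : ∀ x ∈ XG, L x ⊆ Set.range Sum.inl)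
    (hLY : ∀ x ∉ XG, L x ⊆ Set.range Sum.inr)
    (hinc : ∀ x : U, IncompSet (assocBip H) (L x)) :
    (∃ φ : U → W ⊕ W, ListHomRel G (assocBip H).Adj L φ) ↔
    (∃ ψ : U → W, ListHomRel G H
      (fun x => {u : W | Sum.inl u ∈ L x ∨ Sum.inr u ∈ L x}) ψ) :=
  consistent_assocBip_iff_general H hsym G L XG hbipG hLX hLY
end

section
/- Let H be a bipartite graph and let 𝔻 = {D_1,…,D_k} be a set of walks D_i : s_i → t_i in H, all of the same length ℓ ≥ 1, with all starting vertices s_i in one bipartition class. Let (A,B) be a partition of 𝔻 into two non-empty sets, and for C ∈ {A,B} set S(C) = {s_i : D_i ∈ C} and T(C) = {t_i : D_i ∈ C}. Suppose S(A) ∩ S(B) = ∅, T(A) ∩ T(B) = ∅, and every walk in A avoids every walk in B. Then the path ℙ(𝔻), with input vertex x, output vertex y and lists L, satisfies: (a) L(x) = S(A) ∪ S(B) and L(y) = T(A) ∪ T(B); (b) for every i ∈ {1,…,k} there is a list homomorphism f_i : (ℙ(𝔻),L) → H with f_i(x) = s_i and f_i(y) = t_i; (c) for every list homomorphism f : (ℙ(𝔻),L)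 → H, if f(x) ∈ S(A) then f(y) ∉ T(B). Furthermore, if additionally every walk in B avoids every walk in A, then (d) for every list homomorphism f : (ℙ(𝔻),L) → H, if f(x) ∈ S(B) then f(y) ∉ T(A). -/
open SimpleGraph

/-- `X` is a bipartition class of `H`. -/
def BipClass {W : Type} (H : SimpleGraph W) (X : Set W) : Prop :=
  ∀ ⦃u v : W⦄, H.Adj u v → (u ∈ X ↔ v ∉ X)

/-- Walk `P` avoids walk `Q` (walks of equal length starting in one bipartition class). -/
def Avoids {W : Type} (H : SimpleGraph W) {a b c d : W}
    (P : H.Walk a b) (Q : H.Walk c d) : Prop :=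
  a ≠ c ∧ ∀ i, i < P.length → ¬ H.Adj (P.getVert i) (Q.getVert (i + 1))

/-!
A walk `D i` read off position by position is a list homomorphism from `ℙ(𝔻)`, which gives (b);
(a) is just the first and last lists. For (c), take a list homomorphism `f` starting outside
`S(B)`. By induction along the path, `f j` is never the `j`-th vertex of a walk of `B`: if
`f j` is the `j`-th vertex of some walk of `A`, then `f (j + 1)`, being adjacent to it, cannot
be the `(j + 1)`-th vertex of a walk of `B`, because walks of `A` avoid walks of `B`. At the
output vertex this says `f y ∉ T(B)`. Part (d) is the same argument with `A` and `B` swapped.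
-/

namespace SimpleGraph

variable {W : Type} {H : SimpleGraph W}

theorem Walk.getVert_of_length_eq {u v : W} (P : H.Walk u v) {ℓ : ℕ} (h : P.length = ℓ) :
    P.getVert ℓ = v :=
  h ▸ P.getVert_length

theorem Walk.adj_getVert_of_pathGraph_adj {u v : W} (P : H.Walk u v) {n : ℕ}
    (hn : n ≤ P.length + 1) {a b : Fin n} (hab : (pathGraph n).Adj a b) :
    H.Adj (P.getVert a) (P.getVert b) := by
  rcases pathGraph_adj.1 hab with h | h
  · exact h ▸ P.adj_getVert_succ (by omega)
  · exact (h ▸ P.adj_getVert_succ (by omega)).symm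

variable {ℓ : ℕ} {L : Fin (ℓ + 1) → Set W}

theorem listHomRel_pathGraph_getVert {u v : W} (P : H.Walk u v) (hP : P.length = ℓ)
    (hL : ∀ j : Fin (ℓ + 1), P.getVert j ∈ L j) :
    ListHomRel (pathGraph (ℓ + 1)) H.Adj L fun j => P.getVert j :=
  ⟨hL, fun _ _ => P.adj_getVert_of_pathGraph_adj (by omega)⟩

variable {ι : Type} {s t : ι → W} {D : (i : ι) → H.Walk (s i) (t i)}
  {f : Fin (ℓ + 1) → W} {C : Set ι}

theorem ListHomRel.apply_ne_getVert_of_avoids (hlen : ∀ i, (D i).length = ℓ)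
    (hL : ∀ j, L j ⊆ {w | ∃ i, (D i).getVert j = w})
    (hf : ListHomRel (pathGraph (ℓ + 1)) H.Adj L f)
    (hav : ∀ i ∉ C, ∀ j ∈ C, Avoids H (D i) (D j)) (h0 : ∀ j ∈ C, f 0 ≠ s j)
    (m : Fin (ℓ + 1)) : ∀ j ∈ C, f m ≠ (D j).getVert m := by
  induction m using Fin.induction with
  | zero => simpa using h0
  | succ m ih =>
    rintro j hj hfj
    obtain ⟨i, hi⟩ := hL _ (hf.1 m.castSucc)
    have hiC : i ∉ C := fun hiC => ih i hiC hi.symm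
    have hadj : H.Adj (f m.castSucc) (f m.succ) := hf.2 (pathGraph_adj.2 (Or.inl rfl))
    rw [← hi, hfj] at hadj
    exact (hav i hiC j hj).2 m (by rw [hlen]; exact m.isLt) hadj

theorem ListHomRel.apply_last_ne_of_avoids (hlen : ∀ i, (D i).length = ℓ)
    (hL : ∀ j, L j ⊆ {w | ∃ i, (D i).getVert j = w})
    (hf : ListHomRel (pathGraph (ℓ + 1)) H.Adj L f)
    (hav : ∀ i ∉ C, ∀ j ∈ C, Avoids H (D i) (D j)) (h0 : ∀ j ∈ C, f 0 ≠ s j) :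
    ∀ j ∈ C, f (Fin.last ℓ) ≠ t j := fun j hj => by
  simpa [(D j).getVert_of_length_eq (hlen j)] using
    hf.apply_ne_getVert_of_avoids hlen hL hav h0 (Fin.last ℓ) j hj

end SimpleGraph

theorem gadget_of_walks_general {W : Type} (H : SimpleGraph W) (k ℓ : ℕ)
    (s t : Fin k → W) (D : (i : Fin k) → H.Walk (s i) (t i))
    (hlen : ∀ i, (D i).length = ℓ)
    (A : Set (Fin k))
    (hS : ∀ i ∈ A, ∀ j ∈ Aᶜ, s i ≠ s j)
    (havoid : ∀ i ∈ A, ∀ j ∈ Aᶜ, Avoids H (D i) (D j))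
    (L : Fin (ℓ + 1) → Set W)
    (hL : ∀ j : Fin (ℓ + 1), L j = {w | ∃ i : Fin k, (D i).getVert (j : ℕ) = w}) :
    (L 0 = {w | ∃ i : Fin k, s i = w} ∧ L (Fin.last ℓ) = {w | ∃ i : Fin k, t i = w}) ∧
    (∀ i : Fin k, ∃ f : Fin (ℓ + 1) → W,
      ListHomRel (SimpleGraph.pathGraph (ℓ + 1)) H.Adj L f ∧
      f 0 = s i ∧ f (Fin.last ℓ) = t i) ∧
    (∀ f : Fin (ℓ + 1) → W, ListHomRel (SimpleGraph.pathGraph (ℓ + 1)) H.Adj L f →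
      (∃ i ∈ A, f 0 = s i) → ¬ ∃ j ∈ Aᶜ, f (Fin.last ℓ) = t j) ∧
    ((∀ i ∈ Aᶜ, ∀ j ∈ A, Avoids H (D i) (D j)) →
      ∀ f : Fin (ℓ + 1) → W, ListHomRel (SimpleGraph.pathGraph (ℓ + 1)) H.Adj L f →
        (∃ i ∈ Aᶜ, f 0 = s i) → ¬ ∃ j ∈ A, f (Fin.last ℓ) = t j) := by
  have hlast (i : Fin k) : (D i).getVert ℓ = t i := (D i).getVert_of_length_eq (hlen i)
  have hLsub (j : Fin (ℓ + 1)) : L j ⊆ {w | ∃ i, (D i).getVert j = w} := (hL j).le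
  refine ⟨⟨by simp [hL], by simp [hL, hlast]⟩, fun i => ?_, ?_, ?_⟩
  · have hmem (j : Fin (ℓ + 1)) : (D i).getVert j ∈ L j := by
      rw [hL]
      exact ⟨i, rfl⟩
    exact ⟨_, listHomRel_pathGraph_getVert (D i) (hlen i) hmem, (D i).getVert_zero, hlast i⟩
  · rintro f hf ⟨i, hi, hfi⟩ ⟨j, hj, hfj⟩
    exact hf.apply_last_ne_of_avoids hlen hLsub (C := Aᶜ)
      (fun i' hi' => havoid i' (not_not.1 hi')) (hfi ▸ hS i hi) j hj hfj
  · rintro havoid' f hf ⟨i, hi, hfi⟩ ⟨j, hj, hfj⟩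
    exact hf.apply_last_ne_of_avoids hlen hLsub (C := A) havoid'
      (fun j' hj' => hfi ▸ (hS j' hj' i hi).symm) j hj hfj

/-- The gadget `ℙ(𝔻)` built from a family `D i : s i → t i` of walks of common length
`ℓ ≥ 1` in a bipartite graph `H` (all starting vertices in one bipartition class `X`),
with lists `L j` = set of `j`-th vertices of the walks, input vertex `0` and output vertex
`Fin.last ℓ` of the path `pathGraph (ℓ+1)`.  If `A, Aᶜ` is a partition of the walks into
two non-empty parts with disjoint start-vertex sets and disjoint end-vertex sets such that
every walk of `A` avoids every walk of `Aᶜ`, then: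
(a) `L 0 = S(A) ∪ S(B)` and `L last = T(A) ∪ T(B)`;
(b) for every `i` there is a list homomorphism sending the input to `s i` and the output
to `t i`;
(c) every list homomorphism sending the input into `S(A)` sends the output outside `T(B)`;
(d) if moreover every walk of `Aᶜ` avoids every walk of `A`, then every list homomorphism
sending the input into `S(B)` sends the output outside `T(A)`. -/
theorem gadget_of_walks {W : Type} [Fintype W] (H : SimpleGraph W) (X : Set W)
    (hbip : BipClass H X) (k ℓ : ℕ) (hℓ : 1 ≤ ℓ)
    (s t : Fin k → W) (D : (i : Fin k) → H.Walk (s i) (t i))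
    (hlen : ∀ i, (D i).length = ℓ) (hsX : ∀ i, s i ∈ X)
    (A : Set (Fin k)) (hA : A.Nonempty) (hB : Aᶜ.Nonempty)
    (hS : ∀ i ∈ A, ∀ j ∈ Aᶜ, s i ≠ s j) (hT : ∀ i ∈ A, ∀ j ∈ Aᶜ, t i ≠ t j)
    (havoid : ∀ i ∈ A, ∀ j ∈ Aᶜ, Avoids H (D i) (D j))
    (L : Fin (ℓ + 1) → Set W)
    (hL : ∀ j : Fin (ℓ + 1), L j = {w | ∃ i : Fin k, (D i).getVert (j : ℕ) = w}) :
    (L 0 = {w | ∃ i : Fin k, s i = w} ∧ L (Fin.last ℓ) = {w | ∃ i : Fin k, t i = w}) ∧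
    (∀ i : Fin k, ∃ f : Fin (ℓ + 1) → W,
      ListHomRel (SimpleGraph.pathGraph (ℓ + 1)) H.Adj L f ∧
      f 0 = s i ∧ f (Fin.last ℓ) = t i) ∧
    (∀ f : Fin (ℓ + 1) → W, ListHomRel (SimpleGraph.pathGraph (ℓ + 1)) H.Adj L f →
      (∃ i ∈ A, f 0 = s i) → ¬ ∃ j ∈ Aᶜ, f (Fin.last ℓ) = t j) ∧
    ((∀ i ∈ Aᶜ, ∀ j ∈ A, Avoids H (D i) (D j)) →
      ∀ f : Fin (ℓ + 1) → W, ListHomRel (SimpleGraph.pathGraph (ℓ + 1)) H.Adj L f →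
        (∃ i ∈ Aᶜ, f 0 = s i) → ¬ ∃ j ∈ A, f (Fin.last ℓ) = t j) :=
  gadget_of_walks_general H k ℓ s t D hlen A hS havoid L hL
end

section
/- Let I = (V,D,C) be an instance of the binary constraint satisfaction problem with primal graph P, let X,Y ⊆ V be disjoint, let E be the set of edges of P with one endpoint in X and the other in Y, and let K := K(I). Then for every set S ⊆ 𝕏 there exists a subset S' ⊆ S with |S'| ≤ (∏_{u∈X} (deg_E(u)+1))^K such that S' is an (X-Y)-representative of S. -/
/-!
Fix `y`. Given the domains, `x` is good for `y` iff each `x u` avoids the set of values of `u`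
conflicting with `y` at some neighbour in `Y`, a set of at most `K · deg_E(u)` elements. So
goodness is the non-vanishing of `∏_u q_u(x u)` for polynomials `q_u` of degree at most
`K · deg_E(u)`, which is a linear functional applied to the vector of monomials of `x` with
multidegree bounded by `(K · deg_E(u))_u`. Any `S' ⊆ S` whose monomial vectors span the same
space as those of `S` is therefore representative, and one can be chosen of size at most the
dimension `∏_u (K · deg_E(u) + 1) ≤ (∏_u (deg_E(u) + 1))^K` (Bernoulli).
-/

open Finset Polynomial Module

section Representatives

variable {k W A : Type*} [DivisionRing k] [AddCommGroup W] [Module k W] [FiniteDimensional k W]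

theorem exists_subset_ncard_le_finrank_span_image_eq (S : Set A) (Φ : A → W) :
    ∃ S' ⊆ S, S'.ncard ≤ finrank k W ∧
      Submodule.span k (Φ '' S') = Submodule.span k (Φ '' S) := by
  obtain ⟨b, hbS, hspan, hli⟩ := exists_linearIndependent k (Φ '' S)
  obtain ⟨S', hS'S, hinj, rfl⟩ := Set.SurjOn.exists_subset_injOn_image_eq hbS
  have := hli.finite
  have := Fintype.ofFinite (Φ '' S')
  refine ⟨S', hS'S, ?_, hspan⟩
  rw [← hinj.ncard_image, ← Nat.card_coe_set_eq, Nat.card_eq_fintype_card]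
  exact hli.fintype_card_le_finrank

theorem exists_subset_ncard_le_finrank_forall_dual (S : Set A) (Φ : A → W) :
    ∃ S' ⊆ S, S'.ncard ≤ finrank k W ∧
      ∀ ℓ : Dual k W, (∃ x ∈ S, ℓ (Φ x) ≠ 0) → ∃ x ∈ S', ℓ (Φ x) ≠ 0 := by
  obtain ⟨S', hS'S, hcard, hspan⟩ := exists_subset_ncard_le_finrank_span_image_eq (k := k) S Φ
  refine ⟨S', hS'S, hcard, fun ℓ ⟨x, hx, hne⟩ => ?_⟩
  by_contra! hS'
  have hker : Φ '' S ⊆ LinearMap.ker ℓ := by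
    rw [← Submodule.span_le, ← hspan, Submodule.span_le]
    rintro _ ⟨x', hx', rfl⟩
    exact hS' x' hx'
  exact hne (hker ⟨x, hx, rfl⟩)

end Representatives

section BoxMonomials

variable {ι R : Type*} [Fintype ι] [DecidableEq ι]

def boxMonomials [CommSemiring R] (n : ι → ℕ) (t : ι → R) : (∀ i, Fin (n i + 1)) → R :=
  fun e => ∏ i, t i ^ (e i : ℕ)

theorem prod_eval_eq_sum_prod_coeff_mul_boxMonomials [CommSemiring R] {n : ι → ℕ}
    (q : ι → R[X]) (hq : ∀ i, (q i).natDegree ≤ n i) (t : ι → R) :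
    ∏ i, (q i).eval (t i) = ∑ e, (∏ i, (q i).coeff (e i)) * boxMonomials n t e := by
  have heval : ∀ i, (q i).eval (t i) = ∑ j : Fin (n i + 1), (q i).coeff j * t i ^ (j : ℕ) :=
    fun i => by
      rw [eval_eq_sum_range' (Nat.lt_succ_of_le (hq i)),
        Fin.sum_univ_eq_sum_range (fun j => (q i).coeff j * t i ^ j)]
  simp_rw [heval, prod_univ_sum, Fintype.piFinset_univ, boxMonomials, prod_mul_distrib]

theorem exists_dual_boxMonomials_ne_zero_iff [CommRing R] [IsDomain R] {n : ι → ℕ}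
    (B : ι → Finset R) (hB : ∀ i, (B i).card ≤ n i) :
    ∃ ℓ : Dual R ((∀ i, Fin (n i + 1)) → R),
      ∀ t, ℓ (boxMonomials n t) ≠ 0 ↔ ∀ i, t i ∉ B i := by
  set q : ι → R[X] := fun i => ∏ b ∈ B i, (X - C b)
  have hq : ∀ i, (q i).natDegree ≤ n i := by simpa [q] using hB
  refine ⟨dotProductBilin R R (fun e => ∏ i, (q i).coeff (e i)), fun t => ?_⟩
  rw [dotProductBilin_apply_apply, dotProduct,
    ← prod_eval_eq_sum_prod_coeff_mul_boxMonomials q hq]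
  simp [q, eval_prod, prod_ne_zero_iff, sub_ne_zero]

end BoxMonomials

section BinaryCSP

variable {V : Type*} (P : SimpleGraph V) [DecidableRel P.Adj] (D : V → Finset ℕ)
  (R : V → V → Finset (ℕ × ℕ))

theorem card_filter_notMem_le_sup [Fintype V] {u v : V} (huv : P.Adj u v) {a : ℕ}
    (ha : a ∈ D v) :
    ((D u).filter fun b => (b, a) ∉ R u v).card ≤
      univ.sup fun u : V => univ.sup fun v : V =>
        if P.Adj u v then (D v).sup fun a => ((D u).filter fun b => (b, a) ∉ R u v).card
        else 0 := by
  refine le_trans ?_ (le_sup (f := fun u : V => univ.sup fun v : V => _) (mem_univ u))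
  refine le_trans ?_ (le_sup (f := fun v : V => _) (mem_univ v))
  simpa only [huv, if_true] using
    le_sup (f := fun a => ((D u).filter fun b => (b, a) ∉ R u v).card) ha

def conflictingValues (Y : Finset V) (y : Y → ℕ) (u : V) : Finset ℕ :=
  (univ.filter fun v : Y => P.Adj u v).biUnion fun v => (D u).filter fun b => (b, y v) ∉ R u v

variable {P D R}

theorem notMem_conflictingValues_iff {Y : Finset V} {y : Y → ℕ} {u : V} {b : ℕ}
    (hb : b ∈ D u) :
    b ∉ conflictingValues P D R Y y u ↔ ∀ v : Y, P.Adj u v → (b, y v) ∈ R u v := by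
  simp [conflictingValues, hb, -Subtype.forall, -Subtype.exists]

theorem card_conflictingValues_le {K : ℕ}
    (hK : ∀ u v, P.Adj u v → ∀ a ∈ D v, ((D u).filter fun b => (b, a) ∉ R u v).card ≤ K)
    {Y : Finset V} {y : Y → ℕ} (hy : ∀ v : Y, y v ∈ D v) (u : V) :
    (conflictingValues P D R Y y u).card ≤ (Y.filter (P.Adj u)).card * K := by
  refine (card_biUnion_le_card_mul _ _ _
    fun (v : Y) hv => hK u v (mem_filter.1 hv).2 _ (hy v)).trans ?_
  gcongr
  rw [← card_map (Function.Embedding.subtype (· ∈ Y))]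
  refine card_le_card fun v => ?_
  simpa using fun huv hv => ⟨hv, huv⟩

end BinaryCSP

theorem bcsp_representative_sets_general {V : Type} [Fintype V]
    (P : SimpleGraph V) [DecidableRel P.Adj]
    (D : V → Finset ℕ)
    (R : V → V → Finset (ℕ × ℕ))
    (K : ℕ)
    (hK : K = Finset.univ.sup fun u : V => Finset.univ.sup fun v : V =>
      if P.Adj u v then (D v).sup fun a => ((D u).filter fun b => (b, a) ∉ R u v).card
      else 0)
    (X Y : Finset V)
    (S : Set ({ u // u ∈ X } → ℕ)) (hS : ∀ x ∈ S, ∀ u : { u // u ∈ X }, x u ∈ D ↑u) :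
    ∃ S' ⊆ S,
      S'.ncard ≤ (∏ u ∈ X.attach, ((Y.filter fun v => P.Adj ↑u v).card + 1)) ^ K ∧
      ∀ y : { v // v ∈ Y } → ℕ, (∀ v : { v // v ∈ Y }, y v ∈ D ↑v) →
        ((∃ x ∈ S, ∀ (u : { u // u ∈ X }) (v : { v // v ∈ Y }),
            P.Adj ↑u ↑v → (x u, y v) ∈ R ↑u ↑v) ↔
         (∃ x ∈ S', ∀ (u : { u // u ∈ X }) (v : { v // v ∈ Y }),
            P.Adj ↑u ↑v → (x u, y v) ∈ R ↑u ↑v)) := by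
  classical
  set d : X → ℕ := fun u => (Y.filter (P.Adj u)).card
  obtain ⟨S', hS'S, hcard, hrep⟩ := exists_subset_ncard_le_finrank_forall_dual (k := ℚ) S
    fun x => boxMonomials (fun u => d u * K) fun u => (x u : ℚ)
  refine ⟨S', hS'S, ?_, fun y hy => ⟨fun hgood => ?_, fun ⟨x, hx, h⟩ => ⟨x, hS'S hx, h⟩⟩⟩
  · calc S'.ncard ≤ ∏ u, (d u * K + 1) := by simpa using hcard
      _ ≤ ∏ u, (d u + 1) ^ K := prod_le_prod' fun u _ => by
        simpa only [Nat.cast_id, add_comm, mul_comm] using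
          one_add_le_pow_of_two_add_nonneg (Nat.zero_le (2 + d u)) K
      _ = _ := prod_pow _ _ _
  · obtain ⟨ℓ, hℓ⟩ := exists_dual_boxMonomials_ne_zero_iff
      (fun u : X => (conflictingValues P D R Y y u).image (Nat.cast : ℕ → ℚ))
      fun u => card_image_le.trans <| card_conflictingValues_le
        (fun u v huv a ha => hK ▸ card_filter_notMem_le_sup P D R huv ha) hy u
    have hℓS : ∀ x ∈ S, ℓ (boxMonomials _ fun u => (x u : ℚ)) ≠ 0 ↔
        ∀ (u : X) (v : Y), P.Adj u v → (x u, y v) ∈ R u v := fun x hx => by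
      simp only [hℓ, Nat.cast_injective.mem_finset_image,
        notMem_conflictingValues_iff (hS x hx _)]
    obtain ⟨x, hx, hne⟩ := hrep ℓ (hgood.imp fun x ⟨hx, h⟩ => ⟨hx, (hℓS x hx).2 h⟩)
    exact ⟨x, hx, (hℓS x (hS'S hx)).1 hne⟩

/-- Representative sets for binary CSPs.  A BCSP instance is modelled by its primal graph
`P` on the variable set `V`, domains `D v ⊆ ℕ₊`, and, for every edge `uv` of `P`, the
constraint `R u v ⊆ D u × D v` (stored symmetrically: `(a,b) ∈ R u v ↔ (b,a) ∈ R v u`).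
`K` is the invariant `K(I)`: the maximum, over edges `uv` and `a ∈ D v`, of the number of
values `b ∈ D u` with `(b,a)` forbidden.  For disjoint variable sets `X, Y` and the set
`E` of edges between them, every set `S` of (domain-respecting) tuples on `X` has an
`(X-Y)`-representative subset `S'` of size at most `(∏_{u ∈ X} (deg_E(u)+1))^K`:
for every domain-respecting tuple `y` on `Y`, some `x ∈ S` together with `y` satisfies
all constraints between `X` and `Y` iff some `x' ∈ S'` does. -/
theorem bcsp_representative_sets {V : Type} [Fintype V] [DecidableEq V]
    (P : SimpleGraph V) [DecidableRel P.Adj]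
    (D : V → Finset ℕ) (hpos : ∀ v, ∀ a ∈ D v, 0 < a)
    (R : V → V → Finset (ℕ × ℕ))
    (hsym : ∀ u v a b, (a, b) ∈ R u v ↔ (b, a) ∈ R v u)
    (K : ℕ)
    (hK : K = Finset.univ.sup fun u : V => Finset.univ.sup fun v : V =>
      if P.Adj u v then (D v).sup fun a => ((D u).filter fun b => (b, a) ∉ R u v).card
      else 0)
    (X Y : Finset V) (hXY : Disjoint X Y)
    (S : Set ({ u // u ∈ X } → ℕ)) (hS : ∀ x ∈ S, ∀ u : { u // u ∈ X }, x u ∈ D ↑u) :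
    ∃ S' ⊆ S,
      S'.ncard ≤ (∏ u ∈ X.attach, ((Y.filter fun v => P.Adj ↑u v).card + 1)) ^ K ∧
      ∀ y : { v // v ∈ Y } → ℕ, (∀ v : { v // v ∈ Y }, y v ∈ D ↑v) →
        ((∃ x ∈ S, ∀ (u : { u // u ∈ X }) (v : { v // v ∈ Y }),
            P.Adj ↑u ↑v → (x u, y v) ∈ R ↑u ↑v) ↔
         (∃ x ∈ S', ∀ (u : { u // u ∈ X }) (v : { v // v ∈ Y }),
            P.Adj ↑u ↑v → (x u, y v) ∈ R ↑u ↑v)) :=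
  bcsp_representative_sets_general P D R K hK X Y S hS
end

section
/- Let I = (V,D,C) be an instance of the binary constraint satisfaction problem with primal graph P, and fix an ordering v_1,…,v_n of V. Let i ∈ {1,…,n} and let T'[i−1] ⊆ T[i−1] be an (X_{i−1}-Y_{i−1})-representative of T[i−1]. Define T'[i] to be the set of all tuples x ∈ 𝕏_i for which there exist x' ∈ T'[i−1] and a ∈ D_{v_i} such that: x agrees with x' on X_{i−1} ∩ X_i; for every constraint (v_j,v_i,S_c) ∈ C with v_j ∈ X_{i−1} it holds that (x'_{v_j},a) ∈ S_c; and if v_i ∈ X_i then x_{v_i} = a. Then T'[i] ⊆ T[i] and T'[i] is an (X_i-Y_i)-representative of T[i]. -/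
/-! Dynamic programming over a linear order of the variables of a binary CSP.
The variables are `Fin n`, ordered by their indices (so `v_1, …, v_i` are the vertices
with index `< i`).  A BCSP instance is modelled by its primal graph `P`, domains
`D v ⊆ ℕ`, and for every edge `uv` of `P` a constraint `R u v`, stored symmetrically. -/

/-- The first `i` variables `V_i`. -/
def VsetB (n i : ℕ) : Set (Fin n) := {u | (u : ℕ) < i}

/-- `X_i`: variables among the first `i` having a neighbor outside. -/
def XsetB {n : ℕ} (P : SimpleGraph (Fin n)) (i : ℕ) : Set (Fin n) :=
  {u | (u : ℕ) < i ∧ ∃ v : Fin n, i ≤ (v : ℕ) ∧ P.Adj u v}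

/-- `Y_i`: variables outside the first `i` having a neighbor inside. -/
def YsetB {n : ℕ} (P : SimpleGraph (Fin n)) (i : ℕ) : Set (Fin n) :=
  {v | i ≤ (v : ℕ) ∧ ∃ u : Fin n, (u : ℕ) < i ∧ P.Adj u v}

/-- An assignment is good on `A` if it satisfies all constraints inside `A`. -/
def GoodOnB {n : ℕ} (P : SimpleGraph (Fin n)) (R : Fin n → Fin n → Finset (ℕ × ℕ))
    (A : Set (Fin n)) (x : Fin n → ℕ) : Prop :=
  ∀ u ∈ A, ∀ v ∈ A, P.Adj u v → (x u, x v) ∈ R u v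

/-- `T[i]`: the set of tuples on `X_i` (represented by total assignments, only their
values on `X_i` being relevant) that extend to an assignment good on `V_i`. -/
def TsetB {n : ℕ} (P : SimpleGraph (Fin n)) (D : Fin n → Finset ℕ)
    (R : Fin n → Fin n → Finset (ℕ × ℕ)) (i : ℕ) : Set (Fin n → ℕ) :=
  {x | (∀ u ∈ XsetB P i, x u ∈ D u) ∧
    ∃ z : Fin n → ℕ, (∀ u ∈ XsetB P i, x u = z u) ∧
      (∀ u ∈ VsetB n i, z u ∈ D u) ∧ GoodOnB P R (VsetB n i) z}

/-- The pair `(x, y)` is good (at level `i`): all constraints between `X_i` and `Y_i`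
are satisfied. -/
def GoodPairB {n : ℕ} (P : SimpleGraph (Fin n)) (R : Fin n → Fin n → Finset (ℕ × ℕ))
    (i : ℕ) (x y : Fin n → ℕ) : Prop :=
  ∀ u ∈ XsetB P i, ∀ v ∈ YsetB P i, P.Adj u v → (x u, y v) ∈ R u v

/-- `S'` is an `(X_i-Y_i)`-representative of `S`: `S' ⊆ S` and for every domain-respecting
tuple `y` on `Y_i`, some `x ∈ S` forms a good pair with `y` iff some `x' ∈ S'` does. -/
def ReprB {n : ℕ} (P : SimpleGraph (Fin n)) (D : Fin n → Finset ℕ)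
    (R : Fin n → Fin n → Finset (ℕ × ℕ)) (i : ℕ) (S S' : Set (Fin n → ℕ)) : Prop :=
  S' ⊆ S ∧ ∀ y : Fin n → ℕ, (∀ v ∈ YsetB P i, y v ∈ D v) →
    ((∃ x ∈ S, GoodPairB P R i x y) ↔ ∃ x ∈ S', GoodPairB P R i x y)

/-! A tuple on `X_{i+1}` extends to a good assignment of `V_{i+1} = V_i ∪ {v_{i+1}}` exactly
when it comes from a good assignment `z` of `V_i` together with a value `a` for `v_{i+1}` that is
compatible with all constraints from `X_i` to `v_{i+1}`. Soundness of the step is this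
observation. For representativeness, given `x ∈ T[i+1]` good with `y`, pass to the witness `z`
on `V_i` and the tuple `y` updated by `z v_{i+1}` on `Y_i ⊆ Y_{i+1} ∪ {v_{i+1}}`: the
representative `T'[i]` supplies some `x'` good with it, and `x'` updated by `z v_{i+1}` is an
element of `T'[i+1]` good with `y`. -/

open Function

section Sets

variable {n : ℕ} {P : SimpleGraph (Fin n)} {i : ℕ} {vi : Fin n}

lemma XsetB_subset_VsetB : XsetB P i ⊆ VsetB n i := fun _ hu => hu.1

lemma VsetB_mono {i j : ℕ} (hij : i ≤ j) : VsetB n i ⊆ VsetB n j :=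
  fun u (hu : (u : ℕ) < i) => show (u : ℕ) < j by omega

lemma ne_of_mem_VsetB (hvi : (vi : ℕ) = i) {u : Fin n} (hu : u ∈ VsetB n i) : u ≠ vi :=
  Fin.ne_of_val_ne (by rw [hvi]; exact Nat.ne_of_lt hu)

lemma VsetB_succ (hvi : (vi : ℕ) = i) : VsetB n (i + 1) = insert vi (VsetB n i) := by
  ext u
  change (u : ℕ) < i + 1 ↔ u = vi ∨ (u : ℕ) < i
  rw [Fin.ext_iff, hvi]
  omega

lemma mem_XsetB_of_adj {u v : Fin n} (hu : (u : ℕ) < i) (hv : i ≤ (v : ℕ)) (h : P.Adj u v) :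
    u ∈ XsetB P i :=
  ⟨hu, v, hv, h⟩

lemma mem_YsetB_of_adj {u v : Fin n} (hu : (u : ℕ) < i) (hv : i ≤ (v : ℕ)) (h : P.Adj u v) :
    v ∈ YsetB P i :=
  ⟨hv, u, hu, h⟩

lemma XsetB_succ_subset (hvi : (vi : ℕ) = i) : XsetB P (i + 1) ⊆ insert vi (XsetB P i) := by
  rintro u ⟨hu, v, hv, h⟩
  rcases eq_or_ne u vi with rfl | hne
  · exact Set.mem_insert _ _
  · have : (u : ℕ) ≠ i := hvi ▸ Fin.val_ne_of_ne hne
    exact Or.inr (mem_XsetB_of_adj (by omega) (by omega) h)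

lemma YsetB_subset_insert (hvi : (vi : ℕ) = i) : YsetB P i ⊆ insert vi (YsetB P (i + 1)) := by
  rintro v ⟨hv, u, hu, h⟩
  rcases eq_or_ne v vi with rfl | hne
  · exact Set.mem_insert _ _
  · have : (v : ℕ) ≠ i := hvi ▸ Fin.val_ne_of_ne hne
    exact Or.inr (mem_YsetB_of_adj (by omega) (by omega) h)

end Sets

section Assignments

variable {n : ℕ} {P : SimpleGraph (Fin n)} {D : Fin n → Finset ℕ}
  {R : Fin n → Fin n → Finset (ℕ × ℕ)}

lemma GoodOnB.mono {A B : Set (Fin n)} {z : Fin n → ℕ} (hz : GoodOnB P R B z) (hAB : A ⊆ B) :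
    GoodOnB P R A z :=
  fun u hu v hv h => hz u (hAB hu) v (hAB hv) h

lemma GoodOnB.update_insert (hsym : ∀ u v a b, (a, b) ∈ R u v ↔ (b, a) ∈ R v u)
    {A : Set (Fin n)} {z : Fin n → ℕ} {w : Fin n} {a : ℕ} (hz : GoodOnB P R A z) (hw : w ∉ A)
    (ha : ∀ u ∈ A, P.Adj u w → (z u, a) ∈ R u w) :
    GoodOnB P R (insert w A) (update z w a) := by
  have hne : ∀ u ∈ A, u ≠ w := fun u hu h => hw (h ▸ hu)
  rintro u (rfl | hu) v (rfl | hv) h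
  · exact (P.irrefl h).elim
  · rw [update_self, update_of_ne (hne v hv), hsym]
    exact ha v hv h.symm
  · rw [update_self, update_of_ne (hne u hu)]
    exact ha u hu h
  · rw [update_of_ne (hne u hu), update_of_ne (hne v hv)]
    exact hz u hu v hv h

lemma mem_TsetB_of_goodOnB {i : ℕ} {z : Fin n → ℕ} (hD : ∀ u ∈ VsetB n i, z u ∈ D u)
    (hz : GoodOnB P R (VsetB n i) z) : z ∈ TsetB P D R i :=
  ⟨fun u hu => hD u (XsetB_subset_VsetB hu), z, fun _ _ => rfl, hD, hz⟩

lemma ReprB.of_subset {i : ℕ} {S S' : Set (Fin n → ℕ)} (hsub : S' ⊆ S)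
    (hex : ∀ y : Fin n → ℕ, (∀ v ∈ YsetB P i, y v ∈ D v) →
      ∀ x ∈ S, GoodPairB P R i x y → ∃ x' ∈ S', GoodPairB P R i x' y) :
    ReprB P D R i S S' :=
  ⟨hsub, fun y hy => ⟨fun ⟨x, hx, hxy⟩ => hex y hy x hx hxy,
    fun ⟨x, hx, hxy⟩ => ⟨x, hsub hx, hxy⟩⟩⟩

end Assignments

section Step

variable {n : ℕ} {P : SimpleGraph (Fin n)} {D : Fin n → Finset ℕ}
  {R : Fin n → Fin n → Finset (ℕ × ℕ)} {i : ℕ} {vi : Fin n}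

/-- The set `T'[i+1]` computed from `T'[i]`, where `vi` is the variable `v_{i+1}`. -/
def dpStepB (P : SimpleGraph (Fin n)) (D : Fin n → Finset ℕ)
    (R : Fin n → Fin n → Finset (ℕ × ℕ)) (i : ℕ) (vi : Fin n) (T' : Set (Fin n → ℕ)) :
    Set (Fin n → ℕ) :=
  {x | (∀ u ∈ XsetB P (i + 1), x u ∈ D u) ∧
    ∃ x' ∈ T', ∃ a ∈ D vi,
      (∀ u ∈ XsetB P i ∩ XsetB P (i + 1), x u = x' u) ∧
      (∀ u ∈ XsetB P i, P.Adj u vi → (x' u, a) ∈ R u vi) ∧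
      (vi ∈ XsetB P (i + 1) → x vi = a)}

lemma dpStepB_subset_TsetB (hsym : ∀ u v a b, (a, b) ∈ R u v ↔ (b, a) ∈ R v u)
    (hvi : (vi : ℕ) = i) {T' : Set (Fin n → ℕ)} (hT' : T' ⊆ TsetB P D R i) :
    dpStepB P D R i vi T' ⊆ TsetB P D R (i + 1) := by
  rintro x ⟨hxD, x', hx', a, ha, hagree, hcons, hxvi⟩
  obtain ⟨-, z, hx'z, hzD, hz⟩ := hT' hx'
  have hviV : vi ∉ VsetB n i := fun h => ne_of_mem_VsetB hvi h rfl
  have hcompat : ∀ u ∈ VsetB n i, P.Adj u vi → (z u, a) ∈ R u vi := fun u hu h => by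
    have huX : u ∈ XsetB P i := mem_XsetB_of_adj hu hvi.ge h
    rw [← hx'z u huX]
    exact hcons u huX h
  refine ⟨hxD, update z vi a, fun u hu => ?_, ?_, ?_⟩
  · rcases eq_or_ne u vi with rfl | hne
    · rw [update_self, hxvi hu]
    · have huX : u ∈ XsetB P i := (XsetB_succ_subset hvi hu).resolve_left hne
      rw [update_of_ne hne, hagree u ⟨huX, hu⟩, hx'z u huX]
  · rw [VsetB_succ hvi]
    rintro u (rfl | hu)
    · rwa [update_self]
    · rw [update_of_ne (ne_of_mem_VsetB hvi hu)]
      exact hzD u hu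
  · rw [VsetB_succ hvi]
    exact hz.update_insert hsym hviV hcompat

lemma goodPairB_update_of_goodOnB_succ (hvi : (vi : ℕ) = i) {x y z : Fin n → ℕ}
    (hz : GoodOnB P R (VsetB n (i + 1)) z) (hxz : ∀ u ∈ XsetB P (i + 1), x u = z u)
    (hxy : GoodPairB P R (i + 1) x y) :
    GoodPairB P R i z (update y vi (z vi)) := by
  rintro u ⟨hu, -⟩ v ⟨hv, -⟩ h
  rcases eq_or_ne v vi with rfl | hne
  · rw [update_self]
    exact hz u (VsetB_mono i.le_succ hu) v (by rw [VsetB_succ hvi]; exact Set.mem_insert _ _) h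
  · have : (v : ℕ) ≠ i := hvi ▸ Fin.val_ne_of_ne hne
    have huX : u ∈ XsetB P (i + 1) := mem_XsetB_of_adj (by omega) (by omega) h
    rw [update_of_ne hne, ← hxz u huX]
    exact hxy u huX v (mem_YsetB_of_adj (by omega) (by omega) h) h

lemma goodPairB_succ_update (hvi : (vi : ℕ) = i) {x' y : Fin n → ℕ} {a : ℕ}
    (hx'y : GoodPairB P R i x' (update y vi a))
    (ha : ∀ v ∈ YsetB P (i + 1), P.Adj vi v → (a, y v) ∈ R vi v) :
    GoodPairB P R (i + 1) (update x' vi a) y := by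
  intro u hu v hv h
  rcases eq_or_ne u vi with rfl | hne
  · rw [update_self]
    exact ha v hv h
  · have huX : u ∈ XsetB P i := (XsetB_succ_subset hvi hu).resolve_left hne
    have hvne : v ≠ vi := Fin.ne_of_val_ne (by rw [hvi]; exact (Nat.lt_of_succ_le hv.1).ne')
    have := hx'y u huX v (mem_YsetB_of_adj huX.1 (Nat.le_of_succ_le hv.1) h) h
    rwa [update_of_ne hvne, ← update_of_ne hne a x'] at this

lemma exists_mem_dpStepB_goodPairB (hvi : (vi : ℕ) = i) {T' : Set (Fin n → ℕ)}
    (hrep : ReprB P D R i (TsetB P D R i) T') {x y : Fin n → ℕ}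
    (hy : ∀ v ∈ YsetB P (i + 1), y v ∈ D v) (hx : x ∈ TsetB P D R (i + 1))
    (hxy : GoodPairB P R (i + 1) x y) :
    ∃ x'' ∈ dpStepB P D R i vi T', GoodPairB P R (i + 1) x'' y := by
  obtain ⟨-, z, hxz, hzD, hz⟩ := hx
  have hviV : vi ∈ VsetB n (i + 1) := by rw [VsetB_succ hvi]; exact Set.mem_insert _ _
  have hy₀ : ∀ v ∈ YsetB P i, update y vi (z vi) v ∈ D v := by
    intro v hv
    rcases eq_or_ne v vi with rfl | hne
    · rw [update_self]
      exact hzD v hviV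
    · rw [update_of_ne hne]
      exact hy v ((YsetB_subset_insert hvi hv).resolve_left hne)
  have hzT : z ∈ TsetB P D R i :=
    mem_TsetB_of_goodOnB (fun u hu => hzD u (VsetB_mono i.le_succ hu))
      (hz.mono (VsetB_mono i.le_succ))
  obtain ⟨x', hx', hx'y⟩ := (hrep.2 _ hy₀).1 ⟨z, hzT, goodPairB_update_of_goodOnB_succ hvi hz hxz hxy⟩
  have hx'D := (hrep.1 hx').1
  refine ⟨update x' vi (z vi), ⟨fun u hu => ?_, x', hx', z vi, hzD vi hviV, ?_, ?_, ?_⟩, ?_⟩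
  · rcases eq_or_ne u vi with rfl | hne
    · rw [update_self]
      exact hzD u hviV
    · rw [update_of_ne hne]
      exact hx'D u ((XsetB_succ_subset hvi hu).resolve_left hne)
  · exact fun u hu => update_of_ne (ne_of_mem_VsetB hvi hu.1.1) _ _
  · intro u hu h
    have := hx'y u hu vi (mem_YsetB_of_adj hu.1 hvi.ge h) h
    rwa [update_self] at this
  · exact fun _ => update_self _ _ _
  · refine goodPairB_succ_update hvi hx'y fun v hv h => ?_
    have hviX : vi ∈ XsetB P (i + 1) := mem_XsetB_of_adj (by omega) hv.1 h
    rw [← hxz vi hviX]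
    exact hxy vi hviX v hv h

end Step

theorem bcsp_dp_step_general {n : ℕ} (P : SimpleGraph (Fin n)) (D : Fin n → Finset ℕ)
    (R : Fin n → Fin n → Finset (ℕ × ℕ))
    (hsym : ∀ u v a b, (a, b) ∈ R u v ↔ (b, a) ∈ R v u)
    (i : ℕ) (vi : Fin n) (hvi : (vi : ℕ) = i)
    (T' : Set (Fin n → ℕ))
    (hrep : ReprB P D R i (TsetB P D R i) T') :
    ReprB P D R (i + 1) (TsetB P D R (i + 1))
      {x | (∀ u ∈ XsetB P (i + 1), x u ∈ D u) ∧
        ∃ x' ∈ T', ∃ a ∈ D vi,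
          (∀ u ∈ XsetB P i ∩ XsetB P (i + 1), x u = x' u) ∧
          (∀ u ∈ XsetB P i, P.Adj u vi → (x' u, a) ∈ R u vi) ∧
          (vi ∈ XsetB P (i + 1) → x vi = a)} :=
  ReprB.of_subset (dpStepB_subset_TsetB hsym hvi hrep.1)
    fun _ hy _ hx hxy => exists_mem_dpStepB_goodPairB hvi hrep hy hx hxy

/-- The dynamic-programming step: if `T' ⊆ T[i]` is an `(X_i-Y_i)`-representative of
`T[i]` and `v_{i+1}` is the next variable (the vertex `vi` with index `i`), then the set
`Tnext` of all tuples on `X_{i+1}` obtained from some `x' ∈ T'` and a value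
`a ∈ D v_{i+1}` — agreeing with `x'` on `X_i ∩ X_{i+1}`, with `(x'_u, a)` allowed for
every constraint between some `u ∈ X_i` and `v_{i+1}`, and taking value `a` at `v_{i+1}`
if `v_{i+1} ∈ X_{i+1}` — satisfies `Tnext ⊆ T[i+1]` and `Tnext` is an
`(X_{i+1}-Y_{i+1})`-representative of `T[i+1]`. -/
theorem bcsp_dp_step {n : ℕ} (P : SimpleGraph (Fin n)) (D : Fin n → Finset ℕ)
    (R : Fin n → Fin n → Finset (ℕ × ℕ))
    (hsym : ∀ u v a b, (a, b) ∈ R u v ↔ (b, a) ∈ R v u)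
    (i : ℕ) (hi : i < n) (vi : Fin n) (hvi : (vi : ℕ) = i)
    (T' : Set (Fin n → ℕ))
    (hrep : ReprB P D R i (TsetB P D R i) T') :
    ReprB P D R (i + 1) (TsetB P D R (i + 1))
      {x | (∀ u ∈ XsetB P (i + 1), x u ∈ D u) ∧
        ∃ x' ∈ T', ∃ a ∈ D vi,
          (∀ u ∈ XsetB P i ∩ XsetB P (i + 1), x u = x' u) ∧
          (∀ u ∈ XsetB P i, P.Adj u vi → (x' u, a) ∈ R u vi) ∧
          (vi ∈ XsetB P (i + 1) → x vi = a)} :=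
  bcsp_dp_step_general P D R hsym i vi hvi T' hrep
end

section
/- Let H be a connected, bipartite, undecomposable graph whose complement is not a circular-arc graph. Then mim(H) − 1 ≤ γ(H) ≤ i(H) − 1. -/
open SimpleGraph

/-- A set is strongly incomparable if every vertex has a private neighbor. -/
def StrongIncompSet {W : Type} (H : SimpleGraph W) (S : Set W) : Prop :=
  ∀ u ∈ S, ∃ u', H.Adj u u' ∧ ∀ w ∈ S, w ≠ u → ¬ H.Adj w u'

/-- An arc of the circle (modelled as `AddCircle 1`): the image of a closed interval. -/
def IsCircArc (A : Set (AddCircle (1 : ℝ))) : Prop :=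
  ∃ s ℓ : ℝ, 0 ≤ ℓ ∧ A = (fun t : ℝ => ((s + t : ℝ) : AddCircle (1 : ℝ))) '' Set.Icc 0 ℓ

/-- A circular-arc graph: vertices can be assigned arcs of a circle so that two distinct
vertices are adjacent iff their arcs intersect. -/
def IsCircularArcGraph {W : Type} (G : SimpleGraph W) : Prop :=
  ∃ a : W → Set (AddCircle (1 : ℝ)),
    (∀ v, IsCircArc (a v)) ∧ ∀ u v : W, u ≠ v → (G.Adj u v ↔ (a u ∩ a v).Nonempty)

/-- In the bipartite graph `H` with bipartition class `X`, the set `S` induces a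
biclique: all cross pairs are adjacent. -/
def InducesBiclique {W : Type} (H : SimpleGraph W) (X S : Set W) : Prop :=
  ∀ u ∈ S ∩ X, ∀ v ∈ S \ X, H.Adj u v

/-- A bipartite decomposition `(D,N,R)` of the bipartite graph `H` with class `X`:
`(D,N,R)` partitions the vertices, `N` is non-empty and separates `D` from `R`,
`D` contains two vertices of one class, `N` induces a biclique, and
`(D∩X)∪(N\X)` and `(D\X)∪(N∩X)` induce bicliques. -/
def BipDecomp {W : Type} (H : SimpleGraph W) (X : Set W) (D N R : Set W) : Prop :=
  N.Nonempty ∧ D ∪ N ∪ R = Set.univ ∧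
  Disjoint D N ∧ Disjoint D R ∧ Disjoint N R ∧
  (∀ d ∈ D, ∀ r ∈ R, ∀ p : H.Walk d r, ∃ v ∈ N, v ∈ p.support) ∧
  (2 ≤ (D ∩ X).ncard ∨ 2 ≤ (D \ X).ncard) ∧
  InducesBiclique H X N ∧
  InducesBiclique H X ((D ∩ X) ∪ (N \ X)) ∧
  InducesBiclique H X ((D \ X) ∪ (N ∩ X))

/-- `H` is undecomposable: it admits no bipartite decomposition. -/
def Undecomposable {W : Type} (H : SimpleGraph W) (X : Set W) : Prop :=
  ¬ ∃ D N R : Set W, BipDecomp H X D N R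

/-- `i(H)`: maximum size of an incomparable set contained in one bipartition class. -/
noncomputable def iNum {W : Type} (H : SimpleGraph W) (X : Set W) : ℕ :=
  sSup {n | ∃ S : Set W, (S ⊆ X ∨ S ⊆ Xᶜ) ∧ IncompSet H S ∧ S.ncard = n}

/-- `mim(H)`: maximum size of a strongly incomparable set contained in one
bipartition class. -/
noncomputable def mimNum {W : Type} (H : SimpleGraph W) (X : Set W) : ℕ :=
  sSup {n | ∃ S : Set W, (S ⊆ X ∨ S ⊆ Xᶜ) ∧ StrongIncompSet H S ∧ S.ncard = n}

/-- `γ(H)`: the maximum, over pairs of incomparable sets `S₁, S₂` lying in different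
bipartition classes, such that every vertex of each set has a neighbor in the other set,
of `max_{x ∈ S₁} |{y ∈ S₂ : xy ∉ E(H)}|`. -/
noncomputable def gammaNum {W : Type} (H : SimpleGraph W) (X : Set W) : ℕ :=
  sSup {m | ∃ S₁ S₂ : Set W,
    ((S₁ ⊆ X ∧ S₂ ⊆ Xᶜ) ∨ (S₁ ⊆ Xᶜ ∧ S₂ ⊆ X)) ∧
    IncompSet H S₁ ∧ IncompSet H S₂ ∧
    (∀ x ∈ S₁, ∃ y ∈ S₂, H.Adj x y) ∧ (∀ y ∈ S₂, ∃ x ∈ S₁, H.Adj x y) ∧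
    ∃ x ∈ S₁, m = {y ∈ S₂ | ¬ H.Adj x y}.ncard}

/-!
A strongly incomparable set `S` in one class, with a choice `f` of private neighbours, yields
the admissible pair `(S, f '' S)` for `γ`: the vertices of `f '' S` are pairwise incomparable
because each `f u` sees `u` and no other vertex of `S`, and a vertex `x ∈ S` misses exactly
`f '' (S \ {x})`, which has `|S| - 1` elements. Conversely, for an admissible pair `(S₁, S₂)`
the set `S₂` is incomparable and lies in one class, and every `x ∈ S₁` has a neighbour in `S₂`,
so `x` misses at most `|S₂| - 1 ≤ i(H) - 1` vertices of `S₂`.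
-/

variable {W : Type} {H : SimpleGraph W} {X S : Set W}

theorem BipClass.compl (hX : BipClass H X) : BipClass H Xᶜ := fun _ _ huv => by
  have := hX huv
  simp only [Set.mem_compl_iff]
  tauto

theorem bddAbove_of_forall_exists_ncard_eq [Finite W] {A : Set ℕ}
    (hA : ∀ n ∈ A, ∃ T : Set W, T.ncard = n) : BddAbove A :=
  ⟨Nat.card W, fun n hn => by
    obtain ⟨T, rfl⟩ := hA n hn
    exact Set.ncard_le_card T⟩

theorem StrongIncompSet.incompSet (hS : StrongIncompSet H S) : IncompSet H S := by
  intro u hu v hv huv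
  obtain ⟨u', huu', hu'⟩ := hS u hu
  obtain ⟨v', hvv', hv'⟩ := hS v hv
  exact ⟨fun hsub => hu' v hv huv.symm (hsub huu'), fun hsub => hv' u hu huv (hsub hvv')⟩

def IsPrivateNeighborMap (H : SimpleGraph W) (S : Set W) (f : W → W) : Prop :=
  ∀ u ∈ S, H.Adj u (f u) ∧ ∀ w ∈ S, w ≠ u → ¬ H.Adj w (f u)

theorem StrongIncompSet.exists_isPrivateNeighborMap (hS : StrongIncompSet H S) :
    ∃ f, IsPrivateNeighborMap H S f := by
  choose! f hf using hS
  exact ⟨f, hf⟩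

namespace IsPrivateNeighborMap

variable {f : W → W}

theorem injOn (hf : IsPrivateNeighborMap H S f) : Set.InjOn f S := fun u hu v hv huv => by
  by_contra hne
  exact (hf v hv).2 u hu hne (huv ▸ (hf u hu).1)

theorem incompSet_image (hf : IsPrivateNeighborMap H S f) : IncompSet H (f '' S) := by
  rintro _ ⟨u, hu, rfl⟩ _ ⟨v, hv, rfl⟩ hne
  have huv : u ≠ v := fun h => hne (h ▸ rfl)
  exact ⟨fun hsub => (hf v hv).2 u hu huv (hsub (hf u hu).1.symm).symm,
    fun hsub => (hf u hu).2 v hv huv.symm (hsub (hf v hv).1.symm).symm⟩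

theorem image_subset_compl (hf : IsPrivateNeighborMap H S f) (hX : BipClass H X)
    (hSX : S ⊆ X) : f '' S ⊆ Xᶜ := by
  rintro _ ⟨u, hu, rfl⟩
  exact (hX (hf u hu).1).mp (hSX hu)

theorem setOf_not_adj_image_eq (hf : IsPrivateNeighborMap H S f) {x : W} (hx : x ∈ S) :
    {y ∈ f '' S | ¬ H.Adj x y} = f '' (S \ {x}) := by
  ext y
  constructor
  · rintro ⟨⟨u, hu, rfl⟩, hxu⟩
    refine ⟨u, ⟨hu, ?_⟩, rfl⟩
    rintro rfl
    exact hxu (hf u hu).1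
  · rintro ⟨u, ⟨hu, hux⟩, rfl⟩
    exact ⟨⟨u, hu, rfl⟩, (hf u hu).2 x hx (Ne.symm hux)⟩

theorem ncard_setOf_not_adj_image (hf : IsPrivateNeighborMap H S f) {x : W} (hx : x ∈ S) :
    {y ∈ f '' S | ¬ H.Adj x y}.ncard = S.ncard - 1 := by
  rw [hf.setOf_not_adj_image_eq hx, (hf.injOn.mono Set.sdiff_subset).ncard_image,
    Set.ncard_sdiff_singleton_of_mem hx]

end IsPrivateNeighborMap

theorem exists_strongIncompSet_ncard_eq_mimNum [Finite W] :
    ∃ S, (S ⊆ X ∨ S ⊆ Xᶜ) ∧ StrongIncompSet H S ∧ S.ncard = mimNum H X := by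
  show mimNum H X ∈ {n | ∃ S : Set W, (S ⊆ X ∨ S ⊆ Xᶜ) ∧ StrongIncompSet H S ∧ S.ncard = n}
  exact Nat.sSup_mem ⟨0, ∅, Or.inl (Set.empty_subset X), fun _ hu => hu.elim, Set.ncard_empty W⟩
    (bddAbove_of_forall_exists_ncard_eq fun _ ⟨S, _, _, hS⟩ => ⟨S, hS⟩)

theorem ncard_sub_one_le_gammaNum [Finite W] (hX : BipClass H X) (hSX : S ⊆ X ∨ S ⊆ Xᶜ)
    (hS : StrongIncompSet H S) : S.ncard - 1 ≤ gammaNum H X := by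
  obtain rfl | ⟨x, hx⟩ := S.eq_empty_or_nonempty
  · simp
  obtain ⟨f, hf⟩ := hS.exists_isPrivateNeighborMap
  have hsides : (S ⊆ X ∧ f '' S ⊆ Xᶜ) ∨ (S ⊆ Xᶜ ∧ f '' S ⊆ X) := by
    rcases hSX with hSX | hSX
    · exact Or.inl ⟨hSX, hf.image_subset_compl hX hSX⟩
    · exact Or.inr ⟨hSX, compl_compl X ▸ hf.image_subset_compl hX.compl hSX⟩
  refine le_csSup (bddAbove_of_forall_exists_ncard_eq
      fun _ ⟨_, _, _, _, _, _, _, _, _, hm⟩ => ⟨_, hm.symm⟩)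
    ⟨S, f '' S, hsides, hS.incompSet, hf.incompSet_image,
      fun u hu => ⟨f u, ⟨u, hu, rfl⟩, (hf u hu).1⟩, ?_, x, hx,
      (hf.ncard_setOf_not_adj_image hx).symm⟩
  rintro _ ⟨u, hu, rfl⟩
  exact ⟨u, hu, (hf u hu).1⟩

theorem ncard_setOf_not_adj_le {S₂ : Set W} {x y₀ : W} (hy₀ : y₀ ∈ S₂) (hxy₀ : H.Adj x y₀)
    (hS₂ : S₂.Finite) : {y ∈ S₂ | ¬ H.Adj x y}.ncard ≤ S₂.ncard - 1 := by
  rw [← Set.ncard_sdiff_singleton_of_mem hy₀]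
  refine Set.ncard_le_ncard (fun y ⟨hy, hxy⟩ => ⟨hy, ?_⟩) hS₂.sdiff
  rintro rfl
  exact hxy hxy₀

theorem gammaNum_le_iNum_sub_one [Finite W] : gammaNum H X ≤ iNum H X - 1 := by
  refine csSup_le' fun m ⟨S₁, S₂, hsides, _, hS₂, hN₁, _, x, hx, hm⟩ => ?_
  have hS₂X : S₂ ⊆ X ∨ S₂ ⊆ Xᶜ := hsides.symm.imp (·.2) (·.2)
  have hS₂i : S₂.ncard ≤ iNum H X :=
    le_csSup (bddAbove_of_forall_exists_ncard_eq fun _ ⟨T, _, _, hT⟩ => ⟨T, hT⟩)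
      ⟨S₂, hS₂X, hS₂, rfl⟩
  obtain ⟨y₀, hy₀, hxy₀⟩ := hN₁ x hx
  calc m ≤ S₂.ncard - 1 := hm ▸ ncard_setOf_not_adj_le hy₀ hxy₀ S₂.toFinite
    _ ≤ iNum H X - 1 := Nat.sub_le_sub_right hS₂i 1

theorem mim_gamma_i_general {W : Type} [Fintype W] (H : SimpleGraph W) (X : Set W)
    (hbip : BipClass H X) :
    mimNum H X - 1 ≤ gammaNum H X ∧ gammaNum H X ≤ iNum H X - 1 := by
  obtain ⟨S, hSX, hS, hcard⟩ := exists_strongIncompSet_ncard_eq_mimNum (H := H) (X := X)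
  exact ⟨hcard ▸ ncard_sub_one_le_gammaNum hbip hSX hS, gammaNum_le_iNum_sub_one⟩

/-- For a connected, bipartite, undecomposable graph `H` whose complement is not a
circular-arc graph: `mim(H) − 1 ≤ γ(H) ≤ i(H) − 1`. -/
theorem mim_gamma_i {W : Type} [Fintype W] (H : SimpleGraph W) (X : Set W)
    (hconn : H.Connected) (hbip : BipClass H X) (hundec : Undecomposable H X)
    (hnca : ¬ IsCircularArcGraph Hᶜ) :
    mimNum H X - 1 ≤ gammaNum H X ∧ gammaNum H X ≤ iNum H X - 1 :=
  mim_gamma_i_general H X hbip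
end

section
/- Let r ≥ 2 and let H be the bipartite graph constructed as follows: start from the complete bipartite graph K_{r+1,r+1} with a perfect matching removed; let u_1, u_2 be non-adjacent vertices lying in different bipartition classes (i.e., a pair of the removed matching); add two new vertices v_1, v_2 and the edges u_1v_2, v_1v_2, and v_1u_2. Then γ(H) ≥ r, every induced matching in H has at most 3 edges (so mim(H) ≤ 3), and i(H) = r + 2. -/
open SimpleGraph

/-- The cross-adjacency between the left class `Fin (r+1) ⊕ Unit` and the right class
`Fin (r+1) ⊕ Unit` of the graph of Statement 17: the two copies of `Fin (r+1)` form a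
complete bipartite graph minus the perfect matching `{i,i}` (so `u₁ = inl 0` on the left
and `u₂ = inl 0` on the right are non-adjacent); the extra vertex `v₁ = inr ()` on the
left is adjacent exactly to `u₂` and to the extra vertex `v₂ = inr ()` on the right; and
`v₂` is adjacent exactly to `u₁` and `v₁`. -/
def crossAdj (r : ℕ) : (Fin (r + 1) ⊕ Unit) → (Fin (r + 1) ⊕ Unit) → Prop
  | Sum.inl i, Sum.inl j => i ≠ j
  | Sum.inl i, Sum.inr _ => i = 0
  | Sum.inr _, Sum.inl j => j = 0
  | Sum.inr _, Sum.inr _ => True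

/-- The bipartite graph of Statement 17. -/
def H17 (r : ℕ) : SimpleGraph ((Fin (r + 1) ⊕ Unit) ⊕ (Fin (r + 1) ⊕ Unit)) where
  Adj x y :=
    (∃ a b, x = Sum.inl a ∧ y = Sum.inr b ∧ crossAdj r a b) ∨
    (∃ a b, x = Sum.inr b ∧ y = Sum.inl a ∧ crossAdj r a b)
  symm := by
    constructor
    rintro x y (⟨a, b, rfl, rfl, h⟩ | ⟨a, b, rfl, rfl, h⟩)
    · exact Or.inr ⟨a, b, rfl, rfl, h⟩
    · exact Or.inl ⟨a, b, rfl, rfl, h⟩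
  loopless := by
    constructor
    rintro x (⟨a, b, h1, h2, _⟩ | ⟨a, b, h1, h2, _⟩) <;> subst h1 <;> simp at h2

/-!
The whole left class is incomparable: two vertices `left i`, `left i'` are told apart by
their matched partners, and `left i`, `v₁` by a neighbour `right j` of `left i` with
`j ∉ {0, i}` (this is where `r ≥ 2` enters) and by whichever of `v₂`, `right 0` the vertex
`left i` misses. Both classes have `r + 2` vertices, so `i(H) = r + 2`; taking `S₂` to be the
right copy of `Fin (r + 1)`, the vertex `v₁` misses `r` of its vertices, so `γ(H) ≥ r`.

For induced matchings, two edges `left i – right j` and `left i' – right j'` with `i ≠ i'` are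
forced into the shape `{i j, j i}` (otherwise `left i` is adjacent to `right j'`). The three
edges of the added path `u₁ v₂ v₁ u₂` pairwise meet, except for its two end edges, and those
cannot both appear alongside an edge `left i – right j`; hence at most `2 + 1` edges.
-/

section Invariants

variable {W : Type} {H : SimpleGraph W}

lemma IncompPair.symm {u v : W} (h : IncompPair H u v) : IncompPair H v u := ⟨h.2, h.1⟩

lemma incompPair_of_adj_of_not_adj {u v y z : W} (huy : H.Adj u y) (hvy : ¬ H.Adj v y)
    (hvz : H.Adj v z) (huz : ¬ H.Adj u z) : IncompPair H u v :=
  ⟨fun h => hvy (h huy), fun h => huz (h hvz)⟩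

lemma le_iNum [Finite W] {X S : Set W} (hS : S ⊆ X ∨ S ⊆ Xᶜ) (hinc : IncompSet H S) :
    S.ncard ≤ iNum H X :=
  le_csSup ⟨Nat.card W, by rintro _ ⟨T, -, -, rfl⟩; exact Set.ncard_le_card T⟩
    ⟨S, hS, hinc, rfl⟩

lemma iNum_le [Finite W] {X : Set W} {n : ℕ} (hX : X.ncard ≤ n) (hXc : Xᶜ.ncard ≤ n) :
    iNum H X ≤ n := by
  refine csSup_le' ?_
  rintro _ ⟨S, hS | hS, -, rfl⟩
  · exact (Set.ncard_le_ncard hS).trans hX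
  · exact (Set.ncard_le_ncard hS).trans hXc

lemma le_gammaNum [Finite W] {X S₁ S₂ : Set W}
    (hX : (S₁ ⊆ X ∧ S₂ ⊆ Xᶜ) ∨ (S₁ ⊆ Xᶜ ∧ S₂ ⊆ X))
    (h₁ : IncompSet H S₁) (h₂ : IncompSet H S₂)
    (hdom₁ : ∀ x ∈ S₁, ∃ y ∈ S₂, H.Adj x y) (hdom₂ : ∀ y ∈ S₂, ∃ x ∈ S₁, H.Adj x y)
    {x : W} (hx : x ∈ S₁) :
    {y ∈ S₂ | ¬ H.Adj x y}.ncard ≤ gammaNum H X :=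
  le_csSup ⟨Nat.card W, by rintro _ ⟨-, -, -, -, -, -, -, x, -, rfl⟩; exact Set.ncard_le_card _⟩
    ⟨S₁, S₂, hX, h₁, h₂, hdom₁, hdom₂, x, hx, rfl⟩

end Invariants

lemma SimpleGraph.Subgraph.IsMatching.eq_of_isInduced {V : Type*} {G : SimpleGraph V}
    {M : G.Subgraph} (hM : M.IsMatching) (hI : M.IsInduced) {a b c d : V}
    (hab : M.Adj a b) (hcd : M.Adj c d) (had : G.Adj a d) : a = c ∧ b = d :=
  have had' : M.Adj a d := hI (M.edge_vert hab) (M.edge_vert hcd.symm) had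
  ⟨hM.eq_of_adj_right had' hcd, hM.eq_of_adj_left hab had'⟩

lemma Set.ncard_pair_le {α : Type*} (a b : α) : ({a, b} : Set α).ncard ≤ 2 :=
  (Set.ncard_insert_le a {b}).trans (by rw [Set.ncard_singleton])

namespace H17

variable {r : ℕ}

abbrev Vertex (r : ℕ) : Type := (Fin (r + 1) ⊕ Unit) ⊕ (Fin (r + 1) ⊕ Unit)

-- `u₁ = left 0` and `u₂ = right 0`.
abbrev left (i : Fin (r + 1)) : Vertex r := .inl (.inl i)
abbrev right (j : Fin (r + 1)) : Vertex r := .inr (.inl j)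
abbrev v₁ (r : ℕ) : Vertex r := .inl (.inr ())
abbrev v₂ (r : ℕ) : Vertex r := .inr (.inr ())

@[simp] lemma adj_inl_inr {a b : Fin (r + 1) ⊕ Unit} :
    (H17 r).Adj (.inl a) (.inr b) ↔ crossAdj r a b := by
  refine ⟨?_, fun h => .inl ⟨a, b, rfl, rfl, h⟩⟩
  rintro (⟨a', b', ha, hb, h⟩ | ⟨_, _, h', _⟩)
  · cases ha; cases hb; exact h
  · cases h'

@[simp] lemma adj_inr_inl {a b : Fin (r + 1) ⊕ Unit} :
    (H17 r).Adj (.inr b) (.inl a) ↔ crossAdj r a b :=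
  (H17 r).adj_comm _ _ |>.trans adj_inl_inr

lemma exists_ne_zero_ne (hr : 2 ≤ r) (i : Fin (r + 1)) : ∃ j, j ≠ 0 ∧ j ≠ i := by
  obtain ⟨j, -, hj⟩ := Finset.exists_mem_notMem_of_card_lt_card (s := {0, i}) (t := .univ)
    (Finset.card_le_two.trans_lt (by simpa using hr))
  exact ⟨j, by simpa [not_or] using hj⟩

lemma incompPair_left_left {i i' : Fin (r + 1)} (h : i ≠ i') :
    IncompPair (H17 r) (left i) (left i') :=
  incompPair_of_adj_of_not_adj (y := right i') (z := right i)
    (by simpa [crossAdj]) (by simp [crossAdj])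
    (by simpa [crossAdj] using h.symm) (by simp [crossAdj])

lemma incompPair_right_right {j j' : Fin (r + 1)} (h : j ≠ j') :
    IncompPair (H17 r) (right j) (right j') :=
  incompPair_of_adj_of_not_adj (y := left j') (z := left j)
    (by simpa [crossAdj] using h.symm) (by simp [crossAdj])
    (by simpa [crossAdj]) (by simp [crossAdj])

lemma incompPair_left_v₁ (hr : 2 ≤ r) (i : Fin (r + 1)) :
    IncompPair (H17 r) (left i) (v₁ r) := by
  obtain ⟨j, hj0, hji⟩ := exists_ne_zero_ne hr i
  by_cases hi : i = 0
  · exact incompPair_of_adj_of_not_adj (y := right j) (z := right 0)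
      (by simpa [crossAdj] using hji.symm) (by simpa [crossAdj])
      (by simp [crossAdj]) (by simp [crossAdj, hi])
  · exact incompPair_of_adj_of_not_adj (y := right j) (z := v₂ r)
      (by simpa [crossAdj] using hji.symm) (by simpa [crossAdj])
      (by simp [crossAdj]) (by simpa [crossAdj])

lemma incompSet_range_inl (hr : 2 ≤ r) : IncompSet (H17 r) (Set.range Sum.inl) := by
  rintro _ ⟨a | _, rfl⟩ _ ⟨a' | _, rfl⟩ hne
  · exact incompPair_left_left (by simpa using hne)
  · exact incompPair_left_v₁ hr a
  · exact (incompPair_left_v₁ hr a').symm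
  · exact absurd rfl hne

lemma ncard_range_inl : (Set.range (Sum.inl : _ → Vertex r)).ncard = r + 2 := by
  simp [Set.ncard_range_of_injective Sum.inl_injective]

lemma ncard_range_inr : (Set.range (Sum.inr : _ → Vertex r)).ncard = r + 2 := by
  simp [Set.ncard_range_of_injective Sum.inr_injective]

lemma ncard_nonadj_v₁_right :
    {y ∈ Set.range (right (r := r)) | ¬ (H17 r).Adj (v₁ r) y}.ncard = r := by
  have : {y ∈ Set.range (right (r := r)) | ¬ (H17 r).Adj (v₁ r) y} = right '' {0}ᶜ := by
    ext y
    constructor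
    · rintro ⟨⟨j, rfl⟩, h⟩
      exact ⟨j, by simpa [crossAdj] using h, rfl⟩
    · rintro ⟨j, hj, rfl⟩
      exact ⟨⟨j, rfl⟩, by simpa [crossAdj] using hj⟩
  rw [this, Set.ncard_image_of_injective _ (fun _ _ h => by simpa using h), Set.ncard_compl]
  simp

lemma iNum_range_inl_eq (hr : 2 ≤ r) : iNum (H17 r) (Set.range Sum.inl) = r + 2 :=
  le_antisymm (iNum_le ncard_range_inl.le (by rw [Set.compl_range_inl, ncard_range_inr]))
    (ncard_range_inl ▸ le_iNum (.inl subset_rfl) (incompSet_range_inl hr))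

lemma le_gammaNum_range_inl (hr : 2 ≤ r) : r ≤ gammaNum (H17 r) (Set.range Sum.inl) := by
  refine ncard_nonadj_v₁_right.symm.le.trans <|
    le_gammaNum ?_ (incompSet_range_inl hr) ?_ ?_ ?_ (⟨_, rfl⟩ : v₁ r ∈ Set.range Sum.inl)
  · refine .inl ⟨subset_rfl, ?_⟩
    rintro _ ⟨j, rfl⟩
    simp
  · rintro _ ⟨j, rfl⟩ _ ⟨j', rfl⟩ hne
    exact incompPair_right_right (by simpa using hne)
  · rintro _ ⟨i | _, rfl⟩
    · obtain ⟨j, -, hji⟩ := exists_ne_zero_ne hr i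
      exact ⟨right j, ⟨j, rfl⟩, by simpa [crossAdj] using hji.symm⟩
    · exact ⟨right 0, ⟨0, rfl⟩, by simp [crossAdj]⟩
  · rintro _ ⟨j, rfl⟩
    obtain ⟨i, -, hij⟩ := exists_ne_zero_ne hr j
    exact ⟨left i, ⟨_, rfl⟩, by simpa [crossAdj]⟩

def pathEdges (r : ℕ) : Set (Sym2 (Vertex r)) :=
  {s(left 0, v₂ r), s(v₁ r, v₂ r), s(v₁ r, right 0)}

lemma mem_edgeSet_cases {e : Sym2 (Vertex r)} (he : e ∈ (H17 r).edgeSet) :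
    (∃ i j, e = s(left i, right j)) ∨ e ∈ pathEdges r := by
  obtain ⟨a, b, hab, rfl⟩ : ∃ a b, crossAdj r a b ∧ e = s(.inl a, .inr b) := by
    induction e using Sym2.ind with
    | _ x y =>
      rcases he with ⟨a, b, rfl, rfl, h⟩ | ⟨a, b, rfl, rfl, h⟩
      · exact ⟨a, b, h, rfl⟩
      · exact ⟨a, b, h, Sym2.eq_swap⟩
  rcases a with i | _ <;> rcases b with j | _
  · exact .inl ⟨i, j, rfl⟩
  · obtain rfl : i = 0 := hab
    simp [pathEdges]
  · obtain rfl : j = 0 := hab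
    simp [pathEdges]
  · simp [pathEdges]

section InducedMatching

variable {M : (H17 r).Subgraph}

lemma eq_or_swap_of_adj_left_right (hM : M.IsMatching) (hI : M.IsInduced)
    {i j i' j' : Fin (r + 1)} (h : M.Adj (left i) (right j)) (h' : M.Adj (left i') (right j')) :
    (i' = i ∧ j' = j) ∨ (i' = j ∧ j' = i) := by
  by_cases hij' : i = j'
  · by_cases hi'j : i' = j
    · exact .inr ⟨hi'j, hij'.symm⟩
    · obtain ⟨hi, hj⟩ := hM.eq_of_isInduced hI h' h (by simpa [crossAdj])
      exact .inl ⟨by simpa using hi, by simpa using hj⟩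
  · obtain ⟨hi, hj⟩ := hM.eq_of_isInduced hI h h' (by simpa [crossAdj])
    exact .inl ⟨by simpa using hi.symm, by simpa using hj.symm⟩

lemma subsingleton_edgeSet_inter_pathEdges (hM : M.IsMatching) (hI : M.IsInduced)
    {i j : Fin (r + 1)} (h : M.Adj (left i) (right j)) :
    (M.edgeSet ∩ pathEdges r).Subsingleton := by
  have h₁₂ : ¬ (M.Adj (left 0) (v₂ r) ∧ M.Adj (v₁ r) (v₂ r)) := fun ⟨h₁, h₂⟩ => by
    simpa using (hM.eq_of_isInduced hI h₁ h₂ (by simp [crossAdj])).1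
  have h₂₃ : ¬ (M.Adj (v₁ r) (v₂ r) ∧ M.Adj (v₁ r) (right 0)) := fun ⟨h₂, h₃⟩ => by
    simpa using (hM.eq_of_isInduced hI h₂ h₃ (by simp [crossAdj])).2
  -- `left i` is `left 0`, or else it is adjacent to `right 0`.
  have h₁₃ : ¬ (M.Adj (left 0) (v₂ r) ∧ M.Adj (v₁ r) (right 0)) := fun ⟨h₁, h₃⟩ => by
    by_cases hi : i = 0
    · subst hi
      simpa using (hM.eq_of_isInduced hI h h₁ (by simp [crossAdj])).2
    · simpa using (hM.eq_of_isInduced hI h h₃ (by simpa [crossAdj])).1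
  rintro e ⟨he, he'⟩ f ⟨hf, hf'⟩
  simp only [pathEdges, Set.mem_insert_iff, Set.mem_singleton_iff] at he' hf'
  rcases he' with rfl | rfl | rfl <;> rcases hf' with rfl | rfl | rfl <;>
    simp only [Subgraph.mem_edgeSet] at he hf <;> tauto

lemma ncard_edgeSet_le_three (hM : M.IsMatching) (hI : M.IsInduced) :
    M.edgeSet.ncard ≤ 3 := by
  by_cases hcore : ∃ i j, M.Adj (left i) (right j)
  · obtain ⟨i, j, hij⟩ := hcore
    have hcover : M.edgeSet ⊆
        {s(left i, right j), s(left j, right i)} ∪ (M.edgeSet ∩ pathEdges r) := by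
      intro e he
      rcases mem_edgeSet_cases (M.edgeSet_subset he) with ⟨i', j', rfl⟩ | hp
      · rcases eq_or_swap_of_adj_left_right hM hI hij he with ⟨rfl, rfl⟩ | ⟨rfl, rfl⟩ <;> simp
      · exact .inr ⟨he, hp⟩
    calc M.edgeSet.ncard
        ≤ ({s(left i, right j), s(left j, right i)} ∪ (M.edgeSet ∩ pathEdges r)).ncard :=
          Set.ncard_le_ncard hcover
      _ ≤ 2 + 1 := (Set.ncard_union_le _ _).trans <| add_le_add (Set.ncard_pair_le _ _) <|
          (Set.ncard_le_one (Set.toFinite _)).2 <|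
            subsingleton_edgeSet_inter_pathEdges hM hI hij
  · have hpath : M.edgeSet ⊆ pathEdges r := fun e he =>
      (mem_edgeSet_cases (M.edgeSet_subset he)).resolve_left
        fun ⟨i, j, hij⟩ => hcore ⟨i, j, by rwa [hij] at he⟩
    calc M.edgeSet.ncard ≤ (pathEdges r).ncard := Set.ncard_le_ncard hpath
      _ ≤ 2 + 1 := (Set.ncard_insert_le _ _).trans <|
          Nat.add_le_add_right (Set.ncard_pair_le _ _) 1

end InducedMatching

end H17

/-- For `r ≥ 2` and the graph `H` of Statement 17 (built from `K_{r+1,r+1}` minus a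
perfect matching by adding the path `u₁ v₂ v₁ u₂`): `γ(H) ≥ r`, every induced matching
of `H` has at most `3` edges (so `mim(H) ≤ 3`), and `i(H) = r + 2` (with respect to the
bipartition class `X = range Sum.inl`). -/
theorem H17_invariants (r : ℕ) (hr : 2 ≤ r) :
    r ≤ gammaNum (H17 r) (Set.range Sum.inl) ∧
    (∀ M : (H17 r).Subgraph, M.IsMatching → M.IsInduced → M.edgeSet.ncard ≤ 3) ∧
    iNum (H17 r) (Set.range Sum.inl) = r + 2 :=
  ⟨H17.le_gammaNum_range_inl hr, fun _ hM hI => H17.ncard_edgeSet_le_three hM hI,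
    H17.iNum_range_inl_eq hr⟩
end
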